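/- arXiv:0810.5219 — 2 statements merged into one kernel-verified Lean document; each statement's English description precedes it below -/
import Mathlib

section
/- Let a1,...,an be positive integers with gcd(a1,...,an)=1 and n ≥ 2. Define F1(a) = max over residues r with 0 ≤ r < a_n of the minimum of x1*a1 + ... + x_{n-1}*a_{n-1} over nonnegative integers x1,...,x_{n-1} satisfying x1*a1 + ... + x_{n-1}*a_{n-1} ≡ r (mod a_n). Then the Frobenius number F(a) (the largest integer not representable as a nonnegative integer combination of a1,...,an) satisfies F(a) = F1(a) - a_n. -/
/-- The minimum of `x₁a₁ + ⋯ + x_{n-1}a_{n-1}` over nonnegative integer vectors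
whose value is congruent to `r` modulo `a_n`. -/
noncomputable def minOverResidue {n : ℕ} (a : Fin (n + 1) → ℕ) (r : ℕ) : ℕ :=
  sInf {s : ℕ | (∃ x : Fin n → ℕ, s = ∑ i, x i * a i.castSucc) ∧
    s % a (Fin.last n) = r}

/-- `F₁(a) = max_{0 ≤ r < aₙ} min {x₁a₁ + ⋯ + x_{n-1}a_{n-1} ≡ r (mod aₙ)}`. -/
noncomputable def F1 {n : ℕ} (a : Fin (n + 1) → ℕ) : ℕ :=
  (Finset.range (a (Fin.last n))).sup (fun r => minOverResidue a r)

/-! Every `m` is a combination `s + k aₙ` with `s` a combination of `a₁, …, aₙ₋₁` congruent to `m`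
modulo `aₙ`, so `m` is representable exactly when `m ≥ minOverResidue a (m % aₙ)`. The
nonrepresentable numbers in the class `r` are thus `minOverResidue a r - aₙ, minOverResidue a r - 2aₙ,
…`, and the largest of them over all classes is `F₁(a) - aₙ`. -/

open Finset

theorem Finset.gcd_natCast {ι : Type*} (s : Finset ι) (f : ι → ℕ) :
    s.gcd (fun i => (f i : ℤ)) = s.gcd f := by
  classical
  induction s using Finset.induction with
  | empty => simp
  | insert i s hi ih =>
    rw [gcd_insert, gcd_insert, ih, ← Int.coe_gcd, Int.gcd_natCast_natCast]
    rfl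

/-- Reduce a Bézout identity `∑ cᵢ aᵢ = 1` modulo `aₙ`, where its last term vanishes, and scale it
by `r`. -/
theorem exists_sum_mul_castSucc_modEq {n : ℕ} (a : Fin (n + 1) → ℕ)
    (hgcd : univ.gcd a = 1) (hN : a (Fin.last n) ≠ 0) (r : ℕ) :
    ∃ x : Fin n → ℕ, ∑ i, x i * a i.castSucc ≡ r [MOD a (Fin.last n)] := by
  set N := a (Fin.last n)
  have : NeZero N := ⟨hN⟩
  obtain ⟨c, hc⟩ := univ.gcd_eq_sum_mul (fun i => (a i : ℤ))
  rw [Finset.gcd_natCast, hgcd, Nat.cast_one] at hc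
  have hbezout : ∑ i : Fin n, (a i.castSucc : ZMod N) * (c i.castSucc : ZMod N) = 1 := by
    have := congrArg (Int.cast : ℤ → ZMod N) hc
    push_cast [Fin.sum_univ_castSucc, N, ZMod.natCast_self] at this
    simpa using this.symm
  refine ⟨fun i => ((r : ZMod N) * c i.castSucc).val, ?_⟩
  rw [← ZMod.natCast_eq_natCast_iff]
  push_cast [ZMod.natCast_zmod_val]
  simp_rw [mul_comm _ (a _ : ZMod N), mul_left_comm _ (r : ZMod N), ← mul_sum, hbezout, mul_one]

section minOverResidue

variable {n : ℕ} {a : Fin (n + 1) → ℕ}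

theorem minOverResidue_le {r : ℕ} (x : Fin n → ℕ)
    (hx : (∑ i, x i * a i.castSucc) % a (Fin.last n) = r) :
    minOverResidue a r ≤ ∑ i, x i * a i.castSucc :=
  Nat.sInf_le ⟨⟨x, rfl⟩, hx⟩

theorem exists_minOverResidue_eq_and_mod_eq (hgcd : univ.gcd a = 1) (hN : a (Fin.last n) ≠ 0)
    {r : ℕ} (hr : r < a (Fin.last n)) :
    (∃ x : Fin n → ℕ, minOverResidue a r = ∑ i, x i * a i.castSucc) ∧
      minOverResidue a r % a (Fin.last n) = r := by
  obtain ⟨x, hx⟩ := exists_sum_mul_castSucc_modEq a hgcd hN r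
  have hmem : minOverResidue a r ∈ {s : ℕ | (∃ x : Fin n → ℕ, s = ∑ i, x i * a i.castSucc) ∧
      s % a (Fin.last n) = r} := Nat.sInf_mem ⟨_, ⟨x, rfl⟩, Eq.trans hx (Nat.mod_eq_of_lt hr)⟩
  exact hmem

theorem minOverResidue_mod_modEq (hgcd : univ.gcd a = 1) (hN : a (Fin.last n) ≠ 0) (m : ℕ) :
    minOverResidue a (m % a (Fin.last n)) ≡ m [MOD a (Fin.last n)] :=
  (exists_minOverResidue_eq_and_mod_eq hgcd hN (Nat.mod_lt m (Nat.pos_of_ne_zero hN))).2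

theorem exists_eq_sum_mul_iff (hgcd : univ.gcd a = 1) (hN : a (Fin.last n) ≠ 0) (m : ℕ) :
    (∃ x : Fin (n + 1) → ℕ, m = ∑ i, x i * a i) ↔ minOverResidue a (m % a (Fin.last n)) ≤ m := by
  constructor
  · rintro ⟨x, rfl⟩
    rw [Fin.sum_univ_castSucc]
    calc minOverResidue a _ ≤ ∑ i : Fin n, x i.castSucc * a i.castSucc :=
          minOverResidue_le _ (Nat.add_mul_mod_self_right _ _ _).symm
      _ ≤ _ := Nat.le_add_right _ _
  · intro hle
    obtain ⟨⟨x, hx⟩, -⟩ := exists_minOverResidue_eq_and_mod_eq hgcd hN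
      (Nat.mod_lt m (Nat.pos_of_ne_zero hN))
    obtain ⟨k, hk⟩ := (Nat.modEq_iff_dvd' hle).mp (minOverResidue_mod_modEq hgcd hN m)
    refine ⟨Fin.snoc x k, ?_⟩
    rw [Fin.sum_univ_castSucc]
    simp only [Fin.snoc_castSucc, Fin.snoc_last]
    lia

end minOverResidue

theorem frobenius_eq_F1_sub_last_general {n : ℕ} (a : Fin (n + 1) → ℕ)
    (hpos : ∀ i, 0 < a i)
    (hgcd : Finset.univ.gcd a = 1)
    (F : ℕ)
    (hF : IsGreatest {m : ℕ | ¬ ∃ x : Fin (n + 1) → ℕ, m = ∑ i, x i * a i} F) :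
    F = F1 a - a (Fin.last n) := by
  set N := a (Fin.last n)
  have hN : N ≠ 0 := (hpos _).ne'
  have hrep := exists_eq_sum_mul_iff hgcd hN
  have hF_add_le : F + N ≤ F1 a := by
    have hF_lt : F < minOverResidue a (F % N) := not_le.mp ((hrep F).not.mp hF.1)
    calc F + N ≤ minOverResidue a (F % N) :=
          (minOverResidue_mod_modEq hgcd hN F).symm.add_le_of_lt hF_lt
      _ ≤ F1 a := le_sup (mem_range.mpr (Nat.mod_lt _ (hpos _)))
  obtain ⟨r, hr, hsup⟩ := exists_mem_eq_sup (range N) (nonempty_range_iff.mpr hN)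
    (minOverResidue a)
  have hF1 : F1 a = minOverResidue a r := hsup
  have hmod : (F1 a - N) % N = r := by
    rw [← Nat.add_mod_right, Nat.sub_add_cancel (by lia), hF1]
    exact (exists_minOverResidue_eq_and_mod_eq hgcd hN (mem_range.mp hr)).2
  have hF1_sub_le : F1 a - N ≤ F := hF.2 fun h ↦ by
    rw [hrep, hmod, ← hF1] at h
    lia
  lia

theorem frobenius_eq_F1_sub_last {n : ℕ} (hn : 1 ≤ n) (a : Fin (n + 1) → ℕ)
    (hpos : ∀ i, 0 < a i)
    (hgcd : Finset.univ.gcd a = 1)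
    (F : ℕ)
    (hF : IsGreatest {m : ℕ | ¬ ∃ x : Fin (n + 1) → ℕ, m = ∑ i, x i * a i} F) :
    F = F1 a - a (Fin.last n) :=
  frobenius_eq_F1_sub_last_general a hpos hgcd F hF
end

section
/- Let α ∈ (0,1) be irrational with continued fraction expansion [0; h1, h2, ...] and convergents p_s/q_s. If S = [[P, P'], [Q, Q']] is a matrix in M (integer entries, det = ±1, 1 ≤ Q ≤ Q', 0 ≤ P ≤ Q, 1 ≤ P' ≤ Q') such that 0 < (Q'α - P')/(-Qα + P) < 1, then there exists s ≥ 1 with P/Q = [0; h1, ..., h_{s-1}], P'/Q' = [0; h1, ..., h_s], and moreover Q/Q' = [0; h_s, h_{s-1}, ..., h1] and (Q'α - P')/(-Qα + P) = [0; h_{s+1}, h_{s+2}, ...]. -/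
open Filter Topology

/-- Value of the finite continued fraction `[0; a₁, …, aₙ]`. -/
noncomputable def cfVal (l : List ℕ) : ℝ :=
  l.foldr (fun a x => 1 / ((a : ℝ) + x)) 0

/-!
Write `t(S) = (Q'α - P') / (P - Qα)`. If `P ≥ 1`, divide `Q'` by `Q` with remainder in `[1, Q]`,
`Q' = aQ + Q₀`, and put `P₀ = P' - aP`: then `S₀ = [[P₀, P], [Q₀, Q]]` is again in `M`, with a
smaller bottom-right entry, and `t(S₀) = 1 / (a + t(S))` lies in `(0, 1)`. By induction on `Q'`,
the columns of `S₀` are the convergents of index `s - 1` and `s`, so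
`t(S₀) = τ_s := E_s / (-E_{s-1})` with `E_s = q_s α - p_s`. The recurrence for `E` gives
`1 / τ_s = h_{s+1} + τ_{s+1}`, and the alternating signs of the `E_s` give `0 < τ < 1`, so
comparing integer parts yields `a = h_{s+1}`. When `P = 0` the matrix is `[[0, 1], [1, Q']]`,
and comparing with `1 / α = h₁ + τ₁` gives `Q' = h₁`.

The continued fraction identities come from
`[0; h₁, …, h_n + x] = (p_n + p_{n-1} x) / (q_n + q_{n-1} x)`; the tail converges to `t(S)`
because `p_n / q_n → α` and this Möbius map in `x` is invertible at `α`.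
-/

/-- `[0; a₁, …, aₙ + x]`. -/
noncomputable def cfTail (l : List ℕ) (x : ℝ) : ℝ :=
  l.foldr (fun (a : ℕ) (y : ℝ) => 1 / (a + y)) x

theorem cfTail_cons (a : ℕ) (l : List ℕ) (x : ℝ) : cfTail (a :: l) x = 1 / (a + cfTail l x) := rfl

theorem cfTail_append (l l' : List ℕ) (x : ℝ) : cfTail (l ++ l') x = cfTail l (cfTail l' x) :=
  List.foldr_append

theorem cfVal_eq_cfTail : ∀ l : List ℕ, cfVal l = cfTail l 0
  | [] => rfl
  | a :: l => congrArg (fun y => 1 / ((a : ℝ) + y)) (cfVal_eq_cfTail l)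

theorem cfTail_nonneg {x : ℝ} (hx : 0 ≤ x) : ∀ l : List ℕ, 0 ≤ cfTail l x
  | [] => hx
  | a :: l => by
    have := cfTail_nonneg hx l
    exact one_div_nonneg.mpr (by positivity)

theorem cfVal_nonneg (l : List ℕ) : 0 ≤ cfVal l := by
  rw [cfVal_eq_cfTail]
  exact cfTail_nonneg le_rfl l

theorem List.range'_one_succ (n : ℕ) : List.range' 1 (n + 1) = List.range' 1 n ++ [n + 1] := by
  rw [List.range'_concat, one_mul, Nat.add_comm]

structure Continuants (h p q : ℕ → ℕ) : Prop where
  one_le_h : ∀ s, 1 ≤ s → 1 ≤ h s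
  q_zero : q 0 = 1
  q_one : q 1 = h 1
  q_rec : ∀ s, 2 ≤ s → q s = h s * q (s - 1) + q (s - 2)
  p_zero : p 0 = 0
  p_one : p 1 = 1
  p_rec : ∀ s, 2 ≤ s → p s = h s * p (s - 1) + p (s - 2)

namespace Continuants

variable {h p q : ℕ → ℕ}

theorem q_add_two (hc : Continuants h p q) (n : ℕ) : q (n + 2) = h (n + 2) * q (n + 1) + q n :=
  hc.q_rec (n + 2) (by omega)

theorem p_add_two (hc : Continuants h p q) (n : ℕ) : p (n + 2) = h (n + 2) * p (n + 1) + p n :=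
  hc.p_rec (n + 2) (by omega)

theorem one_le_q (hc : Continuants h p q) : ∀ n, 1 ≤ q n
  | 0 => hc.q_zero.ge
  | 1 => hc.q_one ▸ hc.one_le_h 1 le_rfl
  | n + 2 => by
    have := hc.one_le_q n
    rw [hc.q_add_two]
    omega

theorem le_q (hc : Continuants h p q) : ∀ n, n ≤ q n
  | 0 => Nat.zero_le _
  | 1 => hc.one_le_q 1
  | n + 2 => by
    have h1 := hc.le_q (n + 1)
    have h2 := hc.one_le_q n
    have h3 := hc.one_le_h (n + 2) (by omega)
    rw [hc.q_add_two]
    nlinarith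

theorem q_mul_sub_p_add_two (hc : Continuants h p q) (α : ℝ) (n : ℕ) :
    (q (n + 2) : ℝ) * α - p (n + 2) =
      h (n + 2) * (q (n + 1) * α - p (n + 1)) + (q n * α - p n) := by
  rw [hc.q_add_two, hc.p_add_two]
  push_cast
  ring

theorem cfTail_eq (hc : Continuants h p q) {x : ℝ} (hx : 0 ≤ x) :
    ∀ n, cfTail ((List.range' 1 (n + 1)).map h) x =
      (p (n + 1) + p n * x) / (q (n + 1) + q n * x)
  | 0 => by simp [cfTail, hc.q_zero, hc.q_one, hc.p_zero, hc.p_one]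
  | n + 1 => by
    have hhx : (h (n + 2) : ℝ) + x ≠ 0 := by
      have := hc.one_le_h (n + 2) (by omega)
      positivity
    rw [List.range'_one_succ, List.map_append, List.map_singleton, cfTail_append, cfTail_cons,
      cfTail_eq hc (one_div_nonneg.mpr (by positivity)) n, hc.p_add_two, hc.q_add_two]
    simp only [cfTail, List.foldr_nil]
    push_cast
    field_simp
    ring

theorem cfVal_eq (hc : Continuants h p q) : ∀ n, cfVal ((List.range' 1 n).map h) = p n / q n
  | 0 => by simp [cfVal, hc.p_zero]
  | n + 1 => by simpa [cfVal_eq_cfTail] using hc.cfTail_eq le_rfl n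

theorem cfVal_reverse (hc : Continuants h p q) :
    ∀ n, cfVal ((List.range' 1 (n + 1)).map h).reverse = q n / q (n + 1)
  | 0 => by simp [cfVal, hc.q_zero, hc.q_one]
  | n + 1 => by
    have hq : (q (n + 1) : ℝ) ≠ 0 := by have := hc.one_le_q (n + 1); positivity
    rw [List.range'_one_succ, List.map_append, List.reverse_append, List.map_singleton,
      List.reverse_singleton, List.singleton_append, cfVal_eq_cfTail, cfTail_cons,
      ← cfVal_eq_cfTail, cfVal_reverse hc n, hc.q_add_two]
    push_cast
    field_simp

end Continuants

/-- `t(S)` for `S = [[P, P'], [Q, Q']]`. -/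
noncomputable def errRatio (α : ℝ) (P P' Q Q' : ℤ) : ℝ :=
  ((Q' : ℝ) * α - P') / (-(Q : ℝ) * α + P)

theorem errRatio_eq_inv_add (α : ℝ) (a P₀ P Q₀ Q : ℤ) (hD : -(Q : ℝ) * α + P ≠ 0) :
    errRatio α P₀ P Q₀ Q = (a + errRatio α P (a * P + P₀) Q (a * Q + Q₀))⁻¹ := by
  unfold errRatio
  rw [add_div' _ _ _ hD, inv_div, ← neg_div_neg_eq]
  push_cast
  ring_nf

theorem inv_add_errRatio_zero {α : ℝ} (hα : α ≠ 0) (a : ℤ) :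
    ((a : ℝ) + errRatio α 0 1 1 a)⁻¹ = α := by
  rw [inv_eq_iff_eq_inv, errRatio]
  push_cast
  rw [neg_one_mul, add_zero]
  field_simp
  ring

theorem Int.eq_of_inv_add_eq_inv_add {a b : ℤ} {t u : ℝ} (ht : t ∈ Set.Ioo 0 1)
    (hu : u ∈ Set.Ioo 0 1) (h : ((a : ℝ) + t)⁻¹ = (b + u)⁻¹) : a = b := by
  have hfloor {c : ℤ} {x : ℝ} (hx : x ∈ Set.Ioo 0 1) : ⌊(c : ℝ) + x⌋ = c := by
    rw [Int.floor_intCast_add, Int.floor_eq_zero_iff.mpr ⟨hx.1.le, hx.2⟩, add_zero]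
  rw [← hfloor (c := a) ht, ← hfloor (c := b) hu, inv_injective h]

/-- `[[P, P'], [Q, Q']] ∈ M`. -/
structure MemM (P P' Q Q' : ℤ) : Prop where
  det : P * Q' - P' * Q = 1 ∨ P * Q' - P' * Q = -1
  one_le_Q : 1 ≤ Q
  Q_le_Q' : Q ≤ Q'
  P_nonneg : 0 ≤ P
  P_le_Q : P ≤ Q
  one_le_P' : 1 ≤ P'
  P'_le_Q' : P' ≤ Q'

namespace MemM

variable {P P' Q Q' : ℤ}

theorem eq_of_P_eq_zero (hM : MemM 0 P' Q Q') : P' = 1 ∧ Q = 1 := by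
  have := hM.one_le_Q
  have := hM.one_le_P'
  rcases hM.det with hd | hd <;> constructor <;> nlinarith

theorem Q_lt_Q' (hM : MemM P P' Q Q') (hP : 1 ≤ P) : Q < Q' := by
  refine lt_of_le_of_ne hM.Q_le_Q' fun hQQ => ?_
  subst hQQ
  have hQ1 : Q = 1 := by
    have hdvd : Q ∣ 1 := by
      rcases hM.det with hd | hd
      · exact ⟨P - P', by linear_combination -hd⟩
      · exact ⟨P' - P, by linear_combination hd⟩
    have := Int.le_of_dvd one_pos hdvd
    linarith [hM.one_le_Q]
  have := hM.P_le_Q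
  have := hM.one_le_P'
  have := hM.P'_le_Q'
  rcases hM.det with hd | hd <;> subst hQ1 <;> omega

theorem descend (hM : MemM P P' Q Q') (hP : 1 ≤ P) :
    ∃ a P₀ Q₀ : ℤ, 1 ≤ a ∧ P' = a * P + P₀ ∧ Q' = a * Q + Q₀ ∧ MemM P₀ P Q₀ Q := by
  have hQ := hM.one_le_Q
  have hQQ' := hM.Q_lt_Q' hP
  have hPQ := hM.P_le_Q
  have hdiv := Int.mul_ediv_add_emod (Q' - 1) Q
  have hr0 := Int.emod_nonneg (Q' - 1) (by omega : Q ≠ 0)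
  have hr1 := Int.emod_lt_of_pos (Q' - 1) (by omega : 0 < Q)
  set a := (Q' - 1) / Q
  have ha : 1 ≤ a := by nlinarith
  have hQ₀ : 1 ≤ Q' - a * Q := by linarith
  have hQ₀Q : Q' - a * Q ≤ Q := by linarith
  have hP_lt_or_det : P < Q ∨ P * Q' - P' * Q = 1 := by
    refine (lt_or_eq_of_le hPQ).imp_right fun hPQ => ?_
    subst hPQ
    rcases hM.det with hd | hd
    · exact hd
    · nlinarith [hM.P'_le_Q']
  refine ⟨a, P' - a * P, Q' - a * Q, ha, by ring, by ring, ?_, hQ₀, hQ₀Q, ?_, ?_, hP, hPQ⟩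
  · rcases hM.det with hd | hd
    · right; linear_combination -hd
    · left; linear_combination -hd
  -- `P₀ Q = P Q₀ - det` and `(Q₀ - P₀) Q = Q₀ (Q - P) + det`
  · rcases hM.det with hd | hd <;> nlinarith
  · rcases hP_lt_or_det with hlt | hd
    · rcases hM.det with hd | hd <;> nlinarith
    · nlinarith

end MemM

namespace Continuants

variable {α : ℝ} {h p q : ℕ → ℕ}

theorem errRatio_mem_Ioo (hc : Continuants h p q)
    (hsign : ∀ s, 0 < (-1 : ℝ) ^ s * (q s * α - p s)) (s : ℕ) :
    errRatio α (p s) (p (s + 1)) (q s) (q (s + 1)) ∈ Set.Ioo 0 1 := by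
  have e₀ := hsign s
  have e₁ := hsign (s + 1)
  have e₂ := hsign (s + 2)
  have hh₂ : (1 : ℝ) ≤ h (s + 2) := by exact_mod_cast hc.one_le_h (s + 2) (by omega)
  rw [pow_succ] at e₁
  rw [pow_add, hc.q_mul_sub_p_add_two] at e₂
  -- multiplying numerator and denominator by `-(-1) ^ s` makes both positive
  have hτ : errRatio α (p s) (p (s + 1)) (q s) (q (s + 1)) =
      ((-1) ^ s * -1 * (q (s + 1) * α - p (s + 1))) / ((-1) ^ s * (q s * α - p s)) := by
    unfold errRatio
    push_cast
    rw [← mul_div_mul_left _ _ (neg_ne_zero.2 (pow_ne_zero s (neg_ne_zero.2 one_ne_zero)))]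
    congr 1 <;> ring
  rw [hτ]
  constructor
  · positivity
  · rw [div_lt_one e₀]
    nlinarith

theorem errRatio_eq_inv_add_errRatio_succ (hc : Continuants h p q)
    (hsign : ∀ s, 0 < (-1 : ℝ) ^ s * (q s * α - p s)) (s : ℕ) :
    errRatio α (p s) (p (s + 1)) (q s) (q (s + 1)) =
      (h (s + 2) + errRatio α (p (s + 1)) (p (s + 2)) (q (s + 1)) (q (s + 2)))⁻¹ := by
  have hD : -(q (s + 1) : ℝ) * α + p (s + 1) ≠ 0 := fun hD => by
    have := hsign (s + 1)
    rw [show (q (s + 1) : ℝ) * α - p (s + 1) = 0 by linarith, mul_zero] at this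
    exact this.false
  have := errRatio_eq_inv_add α (h (s + 2)) (p s) (p (s + 1)) (q s) (q (s + 1))
    (by exact_mod_cast hD)
  rw [hc.p_add_two, hc.q_add_two]
  exact_mod_cast this

theorem eq_h_one (hc : Continuants h p q) (hsign : ∀ s, 0 < (-1 : ℝ) ^ s * (q s * α - p s))
    {Q' : ℤ} (ht : errRatio α 0 1 1 Q' ∈ Set.Ioo 0 1) : Q' = h 1 := by
  have hα : α ≠ 0 := by simpa [hc.q_zero, hc.p_zero] using (hsign 0).ne'
  have hu := hc.errRatio_mem_Ioo hsign 0
  simp only [zero_add, hc.p_zero, hc.p_one, hc.q_zero, hc.q_one, Nat.cast_zero,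
    Nat.cast_one] at hu
  refine Int.eq_of_inv_add_eq_inv_add ht hu ?_
  rw [inv_add_errRatio_zero hα, inv_add_errRatio_zero hα]

theorem exists_eq_convergents (hc : Continuants h p q)
    (hsign : ∀ s, 0 < (-1 : ℝ) ^ s * (q s * α - p s)) {P P' Q Q' : ℤ} (hM : MemM P P' Q Q')
    (ht : errRatio α P P' Q Q' ∈ Set.Ioo 0 1) :
    ∃ s, P = p s ∧ P' = p (s + 1) ∧ Q = q s ∧ Q' = q (s + 1) := by
  have hD : -(Q : ℝ) * α + P ≠ 0 := fun hD => by
    rw [Set.mem_Ioo, errRatio, hD, div_zero] at ht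
    exact ht.1.false
  rcases hM.P_nonneg.eq_or_lt with hP | hP
  · subst hP
    obtain ⟨rfl, rfl⟩ := hM.eq_of_P_eq_zero
    exact ⟨0, by simp [hc.p_zero], by simp [hc.p_one], by simp [hc.q_zero],
      by simp [hc.eq_h_one hsign ht, hc.q_one]⟩
  · have hQQ' := hM.Q_lt_Q' hP
    have hQ := hM.one_le_Q
    obtain ⟨a, P₀, Q₀, ha, rfl, rfl, hM₀⟩ := hM.descend hP
    have ht₀ := errRatio_eq_inv_add α a P₀ P Q₀ Q hD
    have ht₀_mem : errRatio α P₀ P Q₀ Q ∈ Set.Ioo 0 1 := by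
      have ha' : (1 : ℝ) ≤ a := by exact_mod_cast ha
      rw [ht₀]
      exact ⟨inv_pos.2 (by linarith [ht.1]), inv_lt_one_of_one_lt₀ (by linarith [ht.1])⟩
    obtain ⟨s, rfl, rfl, rfl, rfl⟩ := exists_eq_convergents hc hsign hM₀ ht₀_mem
    have ha : a = h (s + 2) := by
      refine Int.eq_of_inv_add_eq_inv_add ht (hc.errRatio_mem_Ioo hsign (s + 1)) ?_
      rw [← ht₀, hc.errRatio_eq_inv_add_errRatio_succ hsign]
      push_cast
      rfl
    subst ha
    refine ⟨s + 1, rfl, ?_, rfl, ?_⟩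
    · rw [hc.p_add_two]; push_cast; ring
    · rw [hc.q_add_two]; push_cast; ring
termination_by Q'.toNat
decreasing_by omega

theorem tendsto_convergents (hc : Continuants h p q)
    (hbound : ∀ s, |(q s : ℝ) * α - p s| < 1 / q (s + 1)) :
    Tendsto (fun n => (p n : ℝ) / q n) atTop (𝓝 α) := by
  refine tendsto_sub_nhds_zero_iff.1 (squeeze_zero_norm (fun n => ?_)
    tendsto_one_div_add_atTop_nhds_zero_nat)
  have hq : (1 : ℝ) ≤ q n := by exact_mod_cast hc.one_le_q n
  have hq' : (n : ℝ) + 1 ≤ q (n + 1) := by exact_mod_cast hc.le_q (n + 1)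
  have hdiff : (p n : ℝ) / q n - α = -(((q n : ℝ) * α - p n) / q n) := by
    field_simp
    ring
  calc ‖(p n : ℝ) / q n - α‖ = |(q n : ℝ) * α - p n| / q n := by
        rw [hdiff, norm_neg, Real.norm_eq_abs, abs_div, abs_of_pos (by positivity : (0 : ℝ) < q n)]
    _ ≤ |(q n : ℝ) * α - p n| := div_le_self (abs_nonneg _) hq
    _ ≤ 1 / q (n + 1) := (hbound n).le
    _ ≤ 1 / ((n : ℝ) + 1) := one_div_le_one_div_of_le (by positivity) hq'

theorem tendsto_cfVal_tail (hc : Continuants h p q)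
    (hsign : ∀ s, 0 < (-1 : ℝ) ^ s * (q s * α - p s))
    (hbound : ∀ s, |(q s : ℝ) * α - p s| < 1 / q (s + 1)) (k : ℕ) :
    Tendsto (fun m => cfVal ((List.range' (k + 2) m).map h)) atTop
      (𝓝 (errRatio α (p k) (p (k + 1)) (q k) (q (k + 1)))) := by
  set x := fun m => cfVal ((List.range' (k + 2) m).map h)
  set y := fun m => (p (k + 1 + m) : ℝ) / q (k + 1 + m)
  have hy : Tendsto y atTop (𝓝 α) :=
    (hc.tendsto_convergents hbound).comp
      (tendsto_atTop_atTop.2 fun n => ⟨n, fun m hm => by omega⟩)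
  have hxy (m : ℕ) : y m = (p (k + 1) + p k * x m) / (q (k + 1) + q k * x m) := by
    have hsplit :
        List.range' 1 (k + 1) ++ List.range' (k + 2) m = List.range' 1 (k + 1 + m) := by
      simpa only [Nat.add_comm 1 (k + 1)] using
        List.range'_append_1 (s := 1) (m := k + 1) (n := m)
    rw [← hc.cfTail_eq (cfVal_nonneg _), cfVal_eq_cfTail, ← cfTail_append, ← List.map_append,
      hsplit, ← cfVal_eq_cfTail, hc.cfVal_eq]
  have hE : (q k : ℝ) * α - p k ≠ 0 := fun hE => by simpa [hE] using hsign k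
  -- invert the Möbius map `x ↦ y` wherever its inverse is defined
  have hx : ∀ᶠ m in atTop, x m = (p (k + 1) - q (k + 1) * y m) / (q k * y m - p k) := by
    filter_upwards [((hy.const_mul (q k : ℝ)).sub_const (p k : ℝ)).eventually_ne hE] with m hm
    have hden : (q (k + 1) : ℝ) + q k * x m ≠ 0 := by
      have := hc.one_le_q (k + 1)
      have := cfVal_nonneg ((List.range' (k + 2) m).map h)
      positivity
    have hxy' := hxy m
    rw [eq_div_iff hden] at hxy'
    rw [eq_div_iff hm]
    linear_combination hxy'
  have hlim : errRatio α (p k) (p (k + 1)) (q k) (q (k + 1)) =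
      (p (k + 1) - q (k + 1) * α) / (q k * α - p k) := by
    rw [errRatio, ← neg_div_neg_eq]
    push_cast
    ring_nf
  rw [hlim]
  exact (Tendsto.div (tendsto_const_nhds.sub (hy.const_mul _))
    ((hy.const_mul _).sub_const _) hE).congr' (hx.mono fun _ => Eq.symm)

end Continuants

theorem consecutive_convergents_characterization_general
    (α : ℝ)
    (h p q : ℕ → ℕ)
    (hh : ∀ s, 1 ≤ s → 1 ≤ h s)
    (hq0 : q 0 = 1) (hq1 : q 1 = h 1)
    (hqrec : ∀ s, 2 ≤ s → q s = h s * q (s - 1) + q (s - 2))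
    (hp0 : p 0 = 0) (hp1 : p 1 = 1)
    (hprec : ∀ s, 2 ≤ s → p s = h s * p (s - 1) + p (s - 2))
    -- `p_s/q_s` are the convergents of the continued fraction
    -- `α = [0; h₁, h₂, …]`.
    (hconv : ∀ s : ℕ, 0 < (-1 : ℝ) ^ s * ((q s : ℝ) * α - (p s : ℝ)) ∧
      |(q s : ℝ) * α - (p s : ℝ)| < 1 / (q (s + 1) : ℝ))
    (P P' Q Q' : ℤ)
    (hdet : P * Q' - P' * Q = 1 ∨ P * Q' - P' * Q = -1)
    (hQ : 1 ≤ Q) (hQQ' : Q ≤ Q') (hP0 : 0 ≤ P) (hPQ : P ≤ Q)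
    (hP' : 1 ≤ P') (hP'Q' : P' ≤ Q')
    (ht0 : 0 < ((Q' : ℝ) * α - P') / (-(Q : ℝ) * α + P))
    (ht1 : ((Q' : ℝ) * α - P') / (-(Q : ℝ) * α + P) < 1) :
    ∃ s : ℕ, 1 ≤ s ∧
      (P : ℝ) / (Q : ℝ) = cfVal ((List.range' 1 (s - 1)).map h) ∧
      (P' : ℝ) / (Q' : ℝ) = cfVal ((List.range' 1 s).map h) ∧
      (Q : ℝ) / (Q' : ℝ) = cfVal (((List.range' 1 s).map h).reverse) ∧
      Tendsto (fun m : ℕ => cfVal ((List.range' (s + 1) m).map h)) atTop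
        (𝓝 (((Q' : ℝ) * α - P') / (-(Q : ℝ) * α + P))) := by
  have hc : Continuants h p q := ⟨hh, hq0, hq1, hqrec, hp0, hp1, hprec⟩
  have hsign s := (hconv s).1
  have hM : MemM P P' Q Q' := ⟨hdet, hQ, hQQ', hP0, hPQ, hP', hP'Q'⟩
  obtain ⟨k, rfl, rfl, rfl, rfl⟩ :=
    hc.exists_eq_convergents hsign hM (show errRatio α P P' Q Q' ∈ Set.Ioo 0 1 from ⟨ht0, ht1⟩)
  refine ⟨k + 1, k.succ_pos, ?_, ?_, ?_, hc.tendsto_cfVal_tail hsign (fun s => (hconv s).2) k⟩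
  · simpa using (hc.cfVal_eq k).symm
  · simpa using (hc.cfVal_eq (k + 1)).symm
  · simpa using (hc.cfVal_reverse k).symm

theorem consecutive_convergents_characterization
    (α : ℝ) (hα : α ∈ Set.Ioo (0 : ℝ) 1) (hirr : Irrational α)
    (h p q : ℕ → ℕ)
    (hh : ∀ s, 1 ≤ s → 1 ≤ h s)
    (hq0 : q 0 = 1) (hq1 : q 1 = h 1)
    (hqrec : ∀ s, 2 ≤ s → q s = h s * q (s - 1) + q (s - 2))
    (hp0 : p 0 = 0) (hp1 : p 1 = 1)
    (hprec : ∀ s, 2 ≤ s → p s = h s * p (s - 1) + p (s - 2))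
    -- `p_s/q_s` are the convergents of the continued fraction
    -- `α = [0; h₁, h₂, …]`.
    (hconv : ∀ s : ℕ, 0 < (-1 : ℝ) ^ s * ((q s : ℝ) * α - (p s : ℝ)) ∧
      |(q s : ℝ) * α - (p s : ℝ)| < 1 / (q (s + 1) : ℝ))
    (P P' Q Q' : ℤ)
    (hdet : P * Q' - P' * Q = 1 ∨ P * Q' - P' * Q = -1)
    (hQ : 1 ≤ Q) (hQQ' : Q ≤ Q') (hP0 : 0 ≤ P) (hPQ : P ≤ Q)
    (hP' : 1 ≤ P') (hP'Q' : P' ≤ Q')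
    (ht0 : 0 < ((Q' : ℝ) * α - P') / (-(Q : ℝ) * α + P))
    (ht1 : ((Q' : ℝ) * α - P') / (-(Q : ℝ) * α + P) < 1) :
    ∃ s : ℕ, 1 ≤ s ∧
      (P : ℝ) / (Q : ℝ) = cfVal ((List.range' 1 (s - 1)).map h) ∧
      (P' : ℝ) / (Q' : ℝ) = cfVal ((List.range' 1 s).map h) ∧
      (Q : ℝ) / (Q' : ℝ) = cfVal (((List.range' 1 s).map h).reverse) ∧
      Tendsto (fun m : ℕ => cfVal ((List.range' (s + 1) m).map h)) atTop
        (𝓝 (((Q' : ℝ) * α - P') / (-(Q : ℝ) * α + P))) :=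
  consecutive_convergents_characterization_general α h p q hh hq0 hq1 hqrec hp0 hp1 hprec hconv P P'
    Q Q' hdet hQ hQQ' hP0 hPQ hP' hP'Q' ht0 ht1
end
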